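/- Let f(z,w) be a holomorphic function on U × V, where U ⊂ ℂ^a and V ⊂ ℂ^b are domains. Assume there is a subdomain V_0 ⊂ V and a nontrivial polynomial P(z,X;w) in the variables z = (z_1,…,z_a) and X whose coefficients are holomorphic functions of w on V_0, such that P(z, f(z,w); w) ≡ 0 for all z ∈ U and w ∈ V_0. Then there is a nontrivial polynomial P̃(z,X;w) in z and X, with coefficients holomorphic on all of V, such that P̃(z, f(z,w); w) ≡ 0 for all z ∈ U and w ∈ V. -/

import Mathlib

open Complex Set

noncomputable section


/-- We identify `ℂ^N` with `Fin N → ℂ`. -/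
abbrev CSp (N : ℕ) : Type := Fin N → ℂ

/-- Componentwise complex conjugation. -/
def conjPt {N : ℕ} (Z : CSp N) : CSp N := fun j => (starRingEnd ℂ) (Z j)

/-- The set `*S = {ζ : conj ζ ∈ S}`. -/
def starSet {N : ℕ} (S : Set (CSp N)) : Set (CSp N) := {ζ | conjPt ζ ∈ S}

/-- The `2N` real coordinates underlying a point of `ℂ^N`. -/
def realCoords {N : ℕ} (z : CSp N) : (Fin N ⊕ Fin N) → ℝ :=
  Sum.elim (fun j => (z j).re) (fun j => (z j).im)

/-- A real algebraic subset of `ℂ^N`: the common zero set of finitely many real-valued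
polynomials in the `2N` underlying real variables. -/
def IsRealAlgebraicSet {N : ℕ} (A : Set (CSp N)) : Prop :=
  ∃ (k : ℕ) (p : Fin k → MvPolynomial (Fin N ⊕ Fin N) ℝ),
    A = {z | ∀ i, MvPolynomial.eval (realCoords z) (p i) = 0}

def IsIrreducibleRealAlgebraicSet {N : ℕ} (A : Set (CSp N)) : Prop :=
  IsRealAlgebraicSet A ∧ A.Nonempty ∧
    ∀ B C : Set (CSp N), IsRealAlgebraicSet B → IsRealAlgebraicSet C →
      A = B ∪ C → A = B ∨ A = C

/-- A complex algebraic subset of `ℂ^N`: the zero set of finitely many holomorphic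
polynomials. -/
def IsComplexAlgebraicSet {N : ℕ} (X : Set (CSp N)) : Prop :=
  ∃ (k : ℕ) (p : Fin k → MvPolynomial (Fin N) ℂ),
    X = {z | ∀ i, MvPolynomial.eval z (p i) = 0}

def IsIrreducibleComplexAlgebraicSet {N : ℕ} (X : Set (CSp N)) : Prop :=
  IsComplexAlgebraicSet X ∧ X.Nonempty ∧
    ∀ B C : Set (CSp N), IsComplexAlgebraicSet B → IsComplexAlgebraicSet C →
      X = B ∪ C → X = B ∨ X = C

/-- `A` is, near `p`, a real analytic submanifold of `ℂ^N` of (real) dimension `m`: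
locally it is the regular zero set of real analytic real-valued defining functions. -/
def IsRealSubmanifoldAt {N : ℕ} (A : Set (CSp N)) (m : ℕ) (p : CSp N) : Prop :=
  ∃ (d : ℕ) (U : Set (CSp N)) (ρ : CSp N → (Fin d → ℝ)),
    m + d = 2 * N ∧ IsOpen U ∧ p ∈ U ∧
    (∀ z ∈ U, AnalyticAt ℝ ρ z) ∧
    (∀ z ∈ U, Function.Surjective (fderiv ℝ ρ z)) ∧
    A ∩ U = {z | z ∈ U ∧ ρ z = 0}

/-- `X` is, near `p`, a complex holomorphic submanifold of `ℂ^N` of complex dimension `k`. -/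
def IsComplexSubmanifoldAt {N : ℕ} (X : Set (CSp N)) (k : ℕ) (p : CSp N) : Prop :=
  ∃ (d : ℕ) (U : Set (CSp N)) (ρ : CSp N → (Fin d → ℂ)),
    k + d = N ∧ IsOpen U ∧ p ∈ U ∧
    (∀ z ∈ U, AnalyticAt ℂ ρ z) ∧
    (∀ z ∈ U, Function.Surjective (fderiv ℂ ρ z)) ∧
    X ∩ U = {z | z ∈ U ∧ ρ z = 0}

/-- The regular points of `A`: points near which `A` is a real analytic submanifold. -/
def regPoints {N : ℕ} (A : Set (CSp N)) : Set (CSp N) :=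
  {p | p ∈ A ∧ ∃ m, IsRealSubmanifoldAt A m p}

/-- `A` has real dimension `m` (the maximal dimension of its manifold points is `m`). -/
def HasRealDim {N : ℕ} (A : Set (CSp N)) (m : ℕ) : Prop :=
  (∃ p ∈ A, IsRealSubmanifoldAt A m p) ∧
    ∀ p ∈ A, ∀ m', IsRealSubmanifoldAt A m' p → m' ≤ m

/-- The (real) tangent space of a set at a point, as the span of the tangent cone. -/
def tangentSubspace {N : ℕ} (A : Set (CSp N)) (q : CSp N) : Submodule ℝ (CSp N) :=
  Submodule.span ℝ (tangentConeAt ℝ A q)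

/-- The complex tangent space of a set at a point. -/
def complexTangentSubspace {N : ℕ} (X : Set (CSp N)) (z : CSp N) : Submodule ℂ (CSp N) :=
  Submodule.span ℂ (tangentConeAt ℂ X z)

/-- The complex structure `J` (multiplication by `i`) as an `ℝ`-linear map. -/
def Jmap (N : ℕ) : (CSp N) →ₗ[ℝ] (CSp N) :=
  (Complex.I • (LinearMap.id : (CSp N) →ₗ[ℂ] (CSp N))).restrictScalars ℝ

/-- `T_q A + J T_q A`. -/
def crSpan {N : ℕ} (A : Set (CSp N)) (q : CSp N) : Submodule ℝ (CSp N) :=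
  tangentSubspace A q ⊔ (tangentSubspace A q).map (Jmap N)

/-- The complex tangent space `T_q A ∩ J T_q A`. -/
def crComplexTangent {N : ℕ} (A : Set (CSp N)) (q : CSp N) : Submodule ℝ (CSp N) :=
  tangentSubspace A q ⊓ (tangentSubspace A q).map (Jmap N)

/-- `A` is CR at `p`: `dim_ℝ (T_q A + J T_q A)` is constant for `q ∈ A` near `p`. -/
def IsCRAt {N : ℕ} (A : Set (CSp N)) (p : CSp N) : Prop :=
  ∃ U : Set (CSp N), IsOpen U ∧ p ∈ U ∧
    ∀ q ∈ A ∩ U, Module.finrank ℝ (crSpan A q) = Module.finrank ℝ (crSpan A p)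

/-- `A` is generic at `p`: `T_p A + J T_p A = T_p ℂ^N`. -/
def IsGenericAt {N : ℕ} (A : Set (CSp N)) (p : CSp N) : Prop :=
  crSpan A p = ⊤

/-- The CR points of `A`: regular points at which `A` is CR. -/
def crPoints {N : ℕ} (A : Set (CSp N)) : Set (CSp N) :=
  {p | p ∈ regPoints A ∧ IsCRAt A p}

def IsCRSubmanifoldPt {N : ℕ} (M : Set (CSp N)) (q : CSp N) : Prop :=
  (∃ m, IsRealSubmanifoldAt M m q) ∧ IsCRAt M q

/-- A (real analytic) CR submanifold. -/
def IsCRSubmanifold {N : ℕ} (M : Set (CSp N)) : Prop :=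
  ∀ q ∈ M, IsCRSubmanifoldPt M q

/-- `M` is minimal at `p`: there is no germ at `p` of a CR submanifold with the same CR
dimension as `M`, contained in and properly smaller than `M`. -/
def IsMinimalAt {N : ℕ} (M : Set (CSp N)) (p : CSp N) : Prop :=
  ¬ ∃ M' : Set (CSp N), p ∈ M' ∧ M' ⊆ M ∧ IsCRSubmanifold M' ∧
      Module.finrank ℝ (crComplexTangent M' p) = Module.finrank ℝ (crComplexTangent M p) ∧
      ∀ V : Set (CSp N), IsOpen V → p ∈ V → M' ∩ V ≠ M ∩ V

/-- `f` is an algebraic (holomorphic) function on the set `S`: it satisfies a polynomial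
equation with holomorphic polynomial coefficients whose leading coefficient does not
vanish identically on `S`. -/
def AlgebraicOnSet {N : ℕ} (f : CSp N → ℂ) (S : Set (CSp N)) : Prop :=
  ∃ (K : ℕ) (a : Fin (K + 1) → MvPolynomial (Fin N) ℂ),
    (¬ ∀ z ∈ S, MvPolynomial.eval z (a (Fin.last K)) = 0) ∧
    ∀ z ∈ S, ∑ k : Fin (K + 1), MvPolynomial.eval z (a k) * (f z) ^ (k : ℕ) = 0

/-- A holomorphic map is algebraic as a germ at `p` if all its components are algebraic
on a neighborhood of `p`. -/
def AlgebraicGermMapAt {N N' : ℕ} (H : CSp N → CSp N') (p : CSp N) : Prop :=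
  ∃ V : Set (CSp N), IsOpen V ∧ p ∈ V ∧ ∀ i, AlgebraicOnSet (fun z => H z i) V

/-- `A` is holomorphically degenerate at `p`: there is a germ at `p` of a holomorphic
vector field tangent to `A` whose coefficients do not all vanish identically on `A`. -/
def HolomorphicallyDegenerateAt {N : ℕ} (A : Set (CSp N)) (p : CSp N) : Prop :=
  ∃ (U : Set (CSp N)) (a : CSp N → CSp N),
    IsOpen U ∧ p ∈ U ∧ (∀ z ∈ U, AnalyticAt ℂ a z) ∧
    (∀ z ∈ A ∩ U, a z ∈ tangentSubspace A z ∧ Jmap N (a z) ∈ tangentSubspace A z) ∧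
    ¬ ∀ z ∈ A ∩ U, a z = 0


/-- Lie bracket of two vector fields on `ℂ^N`. -/
def lieBracketVF {N : ℕ} (X Y : CSp N → CSp N) : CSp N → CSp N :=
  fun z => fderiv ℝ Y z (X z) - fderiv ℝ X z (Y z)

/-- A real analytic section of the complex tangent bundle `T^c M` over `U`. -/
def IsCRVectorField {N : ℕ} (M U : Set (CSp N)) (X : CSp N → CSp N) : Prop :=
  (∀ z ∈ U, AnalyticAt ℝ X z) ∧ ∀ z ∈ M ∩ U, X z ∈ crComplexTangent M z

/-- The Lie algebra generated by the sections of `T^c M` over `U`. -/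
inductive InCRLie {N : ℕ} (M U : Set (CSp N)) : (CSp N → CSp N) → Prop
  | base (X) : IsCRVectorField M U X → InCRLie M U X
  | brkt (X Y) : InCRLie M U X → InCRLie M U Y → InCRLie M U (lieBracketVF X Y)

/-- The evaluation at `p` of the Lie algebra generated by the sections of `T^cM` over `U`. -/
def crLieSpanAt {N : ℕ} (M U : Set (CSp N)) (p : CSp N) : Submodule ℝ (CSp N) :=
  Submodule.span ℝ {v | ∃ X, InCRLie M U X ∧ X p = v}

/-- `M` (of CR dimension `n`) has exactly `r` finite Hörmander numbers at `p0`, counted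
with multiplicity: for all sufficiently small neighborhoods, the Lie algebra generated by
the sections of `T^c M`, evaluated at `p0`, spans a space of dimension `2n + r`. -/
def HasHormanderCount {N : ℕ} (M : Set (CSp N)) (p0 : CSp N) (n r : ℕ) : Prop :=
  ∃ U, IsOpen U ∧ p0 ∈ U ∧ ∀ U', IsOpen U' → p0 ∈ U' → U' ⊆ U →
    Module.finrank ℝ (crLieSpanAt M U' p0) = 2 * n + r

/-- `M` is of finite type at `p` (Bloom–Graham): the Lie algebra generated by the sections
of `T^c M` spans the tangent space of `M` at `p`. -/
def IsFiniteTypeAt {N : ℕ} (M : Set (CSp N)) (p : CSp N) : Prop :=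
  ∃ U, IsOpen U ∧ p ∈ U ∧ crLieSpanAt M U p = tangentSubspace M p

/-- The Segre sets `N_0 = {p0}`, `N_{j+1} = pr_Z (𝓜 ∩ pr_ζ⁻¹(*N_j))` attached to the
complexified defining function `R` of `M` on `U`. -/
def segreSet {N d : ℕ} (R : CSp N → CSp N → (Fin d → ℂ)) (U : Set (CSp N)) (p0 : CSp N) :
    ℕ → Set (CSp N)
  | 0 => {p0}
  | j + 1 => {Z | Z ∈ U ∧ ∃ ζ : CSp N, conjPt ζ ∈ segreSet R U p0 j ∧ R Z ζ = 0}

/-- `S` contains a holomorphic image of generic rank at least `m`. -/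
def dimAtLeast {N : ℕ} (S : Set (CSp N)) (m : ℕ) : Prop :=
  ∃ (k : ℕ) (φ : (Fin k → ℂ) → CSp N) (x : Fin k → ℂ),
    AnalyticAt ℂ φ x ∧ (∀ᶠ y in nhds x, φ y ∈ S) ∧
    m ≤ Module.finrank ℂ (LinearMap.range (fderiv ℂ φ x).toLinearMap)

/-- The generic (complex) dimension of a set: the maximal generic rank of holomorphic
maps parametrizing pieces of it. -/
def HasGenericDim {N : ℕ} (S : Set (CSp N)) (m : ℕ) : Prop :=
  dimAtLeast S m ∧ ¬ dimAtLeast S (m + 1)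


/-- The holomorphic gradient `(∂ρ/∂Z_1, …, ∂ρ/∂Z_N)` of a real-valued function. -/
def holGrad {N : ℕ} (f : CSp N → ℝ) (z : CSp N) : CSp N := fun k =>
  (Complex.ofReal ((fderiv ℝ f z) (Pi.single k 1)) -
    Complex.I * Complex.ofReal ((fderiv ℝ f z) (Pi.single k Complex.I))) / 2

/-- The action of the antiholomorphic (CR) vector field `Σ_k a_k ∂/∂conj(Z_k)` on a
function `g`. -/
def applyCRField {N : ℕ} (a : CSp N → CSp N) (g : CSp N → ℂ) : CSp N → ℂ :=
  fun z => ∑ k : Fin N, a z k *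
    (((fderiv ℝ g z) (Pi.single k 1)) + Complex.I * ((fderiv ℝ g z) (Pi.single k Complex.I))) / 2

/-- Iterated application `L_{w_1} ⋯ L_{w_s} g` of CR vector fields along a word `w`. -/
def applyWord {N n : ℕ} (a : Fin n → (CSp N → CSp N)) (w : List (Fin n)) (g : CSp N → ℂ) :
    CSp N → ℂ :=
  w.foldr (fun j h => applyCRField (a j) h) g

/-- `M` (generic, real analytic) is `k`-nondegenerate at `p`: for (some) real analytic
defining functions `ρ_1,…,ρ_d` and basis `L_1,…,L_n` of CR vector fields, the vectors
`L^α ρ_{j,Z}(p)`, `|α| ≤ k`, span `ℂ^N`. -/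
def IsKNondegenerateAt {N : ℕ} (M : Set (CSp N)) (k : ℕ) (p : CSp N) : Prop :=
  ∃ (d n : ℕ) (U : Set (CSp N)) (ρ : Fin d → CSp N → ℝ) (a : Fin n → (CSp N → CSp N)),
    n + d = N ∧ IsOpen U ∧ p ∈ U ∧
    (∀ j, ∀ z ∈ U, AnalyticAt ℝ (ρ j) z) ∧
    M ∩ U = {z | z ∈ U ∧ ∀ j, ρ j z = 0} ∧
    LinearIndependent ℂ (fun j => holGrad (ρ j) p) ∧
    (∀ i, ∀ z ∈ U, AnalyticAt ℝ (a i) z) ∧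
    (∀ z ∈ M ∩ U, LinearIndependent ℂ (fun i => a i z)) ∧
    (∀ i j, ∀ z ∈ M ∩ U, applyCRField (a i) (fun w => Complex.ofReal (ρ j w)) z = 0) ∧
    Submodule.span ℂ {v : CSp N | ∃ (j : Fin d) (w : List (Fin n)), w.length ≤ k ∧
       v = fun l => applyWord a w (fun z => holGrad (ρ j) z l) p} = ⊤

/-- `M` is essentially finite at `p`: the germ of the analytic set
`𝒱_p = {Z : ρ(Z,ζ) = 0 for all ζ near conj p with ρ(p,ζ) = 0}` equals `{p}`. -/
def IsEssentiallyFiniteAt {N : ℕ} (M : Set (CSp N)) (p : CSp N) : Prop :=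
  ∃ (d : ℕ) (U : Set (CSp N)) (R : CSp N → CSp N → Fin d → ℂ),
    IsOpen U ∧ p ∈ U ∧
    (∀ Z ∈ U, ∀ ζ ∈ starSet U, AnalyticAt ℂ (fun q : CSp N × CSp N => R q.1 q.2) (Z, ζ)) ∧
    (∀ Z ∈ U, ∀ ζ ∈ starSet U, ∀ i,
      (starRingEnd ℂ) (R (conjPt ζ) (conjPt Z) i) = R Z ζ i) ∧
    M ∩ U = {Z | Z ∈ U ∧ R Z (conjPt Z) = 0} ∧
    ∃ V W : Set (CSp N), IsOpen V ∧ p ∈ V ∧ IsOpen W ∧ conjPt p ∈ W ∧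
      {Z | Z ∈ V ∧ ∀ ζ ∈ W, R p ζ = 0 → R Z ζ = 0} = {p}

/-- `V` is a proper real analytic subset of the real analytic submanifold `M`. -/
def IsProperAnalyticSubsetOf {N : ℕ} (V M : Set (CSp N)) : Prop :=
  V ⊆ M ∧ V ≠ M ∧ ∀ p ∈ M, ∃ (U : Set (CSp N)) (f : CSp N → ℝ),
    IsOpen U ∧ p ∈ U ∧ (∀ z ∈ U, AnalyticAt ℝ f z) ∧
    (∀ z ∈ V ∩ U, f z = 0) ∧ ¬ ∀ z ∈ M ∩ U, f z = 0

/-- `S` is a proper complex analytic subset of the open set `Ω`. -/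
def IsProperComplexAnalyticSubsetOf {n : ℕ} (S Ω : Set (Fin n → ℂ)) : Prop :=
  S ⊆ Ω ∧ S ≠ Ω ∧ ∀ x ∈ Ω, ∃ (U : Set (Fin n → ℂ)) (g : (Fin n → ℂ) → ℂ),
    IsOpen U ∧ x ∈ U ∧ (∀ z ∈ U, AnalyticAt ℂ g z) ∧
    (¬ ∀ z ∈ U ∩ Ω, g z = 0) ∧ ∀ z ∈ S ∩ U, g z = 0

/-- Iterated holomorphic partial derivative along the word `w` of directions. -/
def pderivWord {p N : ℕ} (w : List (Fin p)) (f : (Fin p → ℂ) → (Fin N → ℂ)) :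
    (Fin p → ℂ) → (Fin N → ℂ) :=
  w.foldr (fun i g => fun x => fderiv ℂ g x (Pi.single i 1)) f

/-- A homogeneous algebraic submanifold through `0`: defined by real-valued polynomials
with linearly independent differentials at `0`, weighted homogeneous with respect to
positive integer weights. -/
def IsHomogeneousAlgebraicSubmanifold {N : ℕ} (M : Set (CSp N)) : Prop :=
  ∃ (d : ℕ) (ρ : Fin d → MvPolynomial (Fin N ⊕ Fin N) ℝ) (ν : Fin N → ℕ) (r : Fin d → ℕ),
    (∀ j, 0 < ν j) ∧ (0 : CSp N) ∈ M ∧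
    M = {z | ∀ i, MvPolynomial.eval (realCoords z) (ρ i) = 0} ∧
    LinearIndependent ℝ
      (fun i => fderiv ℝ (fun z : CSp N => MvPolynomial.eval (realCoords z) (ρ i)) 0) ∧
    ∀ i, ∀ t : ℝ, 0 < t → ∀ z : CSp N,
      MvPolynomial.eval (realCoords (fun j => (t ^ ν j : ℝ) • z j)) (ρ i)
        = t ^ (r i) * MvPolynomial.eval (realCoords z) (ρ i)

/-- A homogeneous *generic* algebraic submanifold: additionally
`∂ρ_1(0) ∧ … ∧ ∂ρ_d(0) ≠ 0`. -/
def IsHomogeneousGenericSubmanifold {N : ℕ} (M : Set (CSp N)) : Prop :=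
  ∃ (d : ℕ) (ρ : Fin d → MvPolynomial (Fin N ⊕ Fin N) ℝ) (ν : Fin N → ℕ) (r : Fin d → ℕ),
    (∀ j, 0 < ν j) ∧ (0 : CSp N) ∈ M ∧
    M = {z | ∀ i, MvPolynomial.eval (realCoords z) (ρ i) = 0} ∧
    LinearIndependent ℂ
      (fun i => holGrad (fun z : CSp N => MvPolynomial.eval (realCoords z) (ρ i)) 0) ∧
    ∀ i, ∀ t : ℝ, 0 < t → ∀ z : CSp N,
      MvPolynomial.eval (realCoords (fun j => (t ^ ν j : ℝ) • z j)) (ρ i)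
        = t ^ (r i) * MvPolynomial.eval (realCoords z) (ρ i)


/-- `W` is (a representative of the germ of) the CR orbit of `p0` in `M`: a CR
submanifold of `M` through `p0` of the same CR dimension, minimal among all such. -/
def IsCROrbit {N : ℕ} (M : Set (CSp N)) (p0 : CSp N) (W : Set (CSp N)) : Prop :=
  p0 ∈ W ∧ W ⊆ M ∧ IsCRSubmanifold W ∧
    Module.finrank ℝ (crComplexTangent W p0) = Module.finrank ℝ (crComplexTangent M p0) ∧
    ∀ W' : Set (CSp N), p0 ∈ W' → W' ⊆ M → IsCRSubmanifold W' →
      Module.finrank ℝ (crComplexTangent W' p0) = Module.finrank ℝ (crComplexTangent M p0) →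
      ∃ V, IsOpen V ∧ p0 ∈ V ∧ W ∩ V ⊆ W'

/-- `X` is (a representative of the germ of) the intrinsic complexification of `W` at
`p0`: the smallest germ of a complex submanifold of `ℂ^N` containing `W` near `p0`. -/
def IsIntrinsicComplexificationAt {N : ℕ} (W : Set (CSp N)) (p0 : CSp N)
    (X : Set (CSp N)) : Prop :=
  p0 ∈ X ∧ (∃ k, IsComplexSubmanifoldAt X k p0) ∧
    (∃ V, IsOpen V ∧ p0 ∈ V ∧ W ∩ V ⊆ X) ∧
    ∀ X' : Set (CSp N), (∃ k, IsComplexSubmanifoldAt X' k p0) →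
      (∃ V, IsOpen V ∧ p0 ∈ V ∧ W ∩ V ⊆ X') →
      ∃ V, IsOpen V ∧ p0 ∈ V ∧ X ∩ V ⊆ X'

/-- Condition (1) of Theorem 1: `A` is holomorphically nondegenerate at every point of
some nonempty relatively open subset of `A_reg`. -/
def Cond1 {N : ℕ} (A : Set (CSp N)) : Prop :=
  ∃ Ω : Set (CSp N), Ω.Nonempty ∧ (∃ O, IsOpen O ∧ Ω = regPoints A ∩ O) ∧
    ∀ p ∈ Ω, ¬ HolomorphicallyDegenerateAt A p

/-- Condition (2) of Theorem 1: every germ, at a point of `A`, of an algebraic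
holomorphic function whose restriction to `A` is real valued is constant. -/
def Cond2 {N : ℕ} (A : Set (CSp N)) : Prop :=
  ∀ p ∈ A, ∀ U : Set (CSp N), IsOpen U → p ∈ U → ∀ f : CSp N → ℂ,
    DifferentiableOn ℂ f U → AlgebraicOnSet f U →
    (∀ z ∈ A ∩ U, (f z).im = 0) →
    ∃ V, IsOpen V ∧ p ∈ V ∧ ∀ z ∈ V, f z = f p

/-- Condition (3) of Theorem 2: at every CR regular point of `A` there is a germ of a
nonalgebraic biholomorphism of `ℂ^N` fixing the point and mapping `A` into itself. -/
def Cond3 {N : ℕ} (A : Set (CSp N)) : Prop :=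
  ∀ p0 ∈ regPoints A, IsCRAt A p0 →
    ∃ (U : Set (CSp N)) (H : CSp N → CSp N),
      IsOpen U ∧ p0 ∈ U ∧ DifferentiableOn ℂ H U ∧ H p0 = p0 ∧
      LinearMap.det ((fderiv ℂ H p0).toLinearMap) ≠ 0 ∧
      H '' (A ∩ U) ⊆ A ∧ ¬ AlgebraicGermMapAt H p0

/-- The conclusion of Theorem 1 for the set `A`: every germ of a holomorphic self-map of
`ℂ^N` at a point of `A` with Jacobian not identically vanishing on `A`, sending `A` into
a real algebraic set of the same dimension, is algebraic. -/
def Thm1Conclusion {N : ℕ} (A : Set (CSp N)) : Prop :=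
  ∀ (m : ℕ) (A' : Set (CSp N)) (p0 : CSp N) (U : Set (CSp N)) (H : CSp N → CSp N),
    HasRealDim A m → IsRealAlgebraicSet A' → HasRealDim A' m →
    p0 ∈ A → IsOpen U → p0 ∈ U → DifferentiableOn ℂ H U →
    (¬ ∀ z ∈ A ∩ U, LinearMap.det ((fderiv ℂ H z).toLinearMap) = 0) →
    H '' (A ∩ U) ⊆ A' →
    AlgebraicGermMapAt H p0

/-- `Γ` is the graph of a multi-valued algebraic function on `ℂ^j` having `b`
holomorphic, pairwise disjoint branches outside the proper variety `V`. -/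
def MultiValuedAlgebraicGraph {j : ℕ} (V : Set (Fin j → ℂ)) (b : ℕ)
    (Γ : Set ((Fin j → ℂ) × ℂ)) : Prop :=
  0 < b ∧
  (∃ P : MvPolynomial (Fin (j + 1)) ℂ, P ≠ 0 ∧
    ∀ yx ∈ Γ, MvPolynomial.eval (Fin.snoc yx.1 yx.2) P = 0) ∧
  ∀ y : Fin j → ℂ, y ∉ V →
    ∃ (W : Set (Fin j → ℂ)) (g : Fin b → (Fin j → ℂ) → ℂ),
      IsOpen W ∧ y ∈ W ∧ (∀ i, ∀ x ∈ W, AnalyticAt ℂ (g i) x) ∧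
      (∀ i i', i ≠ i' → ∀ x ∈ W, g i x ≠ g i' x) ∧
      ∀ x ∈ W, ∀ X : ℂ, ((x, X) ∈ Γ ↔ ∃ i, X = g i x)

/-- The substitution `(z,χ,τ_1,…,τ_{d}) := (Z_0, ζ_0, ζ_1, …, ζ_d)` used to evaluate
the polynomials `q_j` on the complexification. -/
def segreVars {d : ℕ} (Z ζ : CSp (d + 1)) : Fin (2 + d) → ℂ := fun v =>
  if (v : ℕ) = 0 then Z 0 else if (v : ℕ) = 1 then ζ 0
  else ζ ⟨(v : ℕ) - 1, by have := v.isLt; omega⟩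


private lemma myProdDiffOn {E : Type*} [NormedAddCommGroup E] [NormedSpace ℂ E]
    {s : Set E} {ι : Type*} (u : Finset ι) (g : ι → E → ℂ)
    (h : ∀ i ∈ u, DifferentiableOn ℂ (g i) s) :
    DifferentiableOn ℂ (fun x => ∏ i ∈ u, g i x) s := by
  classical
  induction u using Finset.induction with
  | empty => simpa using differentiableOn_const 1
  | @insert a u ha ih =>
    simp only [Finset.prod_insert ha]
    exact (h a (Finset.mem_insert_self a u)).mul
      (ih fun i hi => h i (Finset.mem_insert_of_mem hi))

private lemma myDetDiffOn {E : Type*} [NormedAddCommGroup E] [NormedSpace ℂ E]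
    {s : Set E} {k : ℕ} (m : Fin k → Fin k → E → ℂ)
    (h : ∀ l j, DifferentiableOn ℂ (m l j) s) :
    DifferentiableOn ℂ (fun x => Matrix.det (Matrix.of fun l j => m l j x)) s := by
  classical
  simp only [Matrix.det_apply', Matrix.of_apply]
  exact DifferentiableOn.fun_sum fun σ _ =>
    (differentiableOn_const _).mul (myProdDiffOn _ _ fun i _ => h (σ i) i)

/-- Identity principle in several complex variables, via restriction to complex lines. -/
private lemma myIdentity {b : ℕ} {V : Set (Fin b → ℂ)} (hV : IsOpen V)
    (hVc : IsPreconnected V) {h : (Fin b → ℂ) → ℂ} (hd : DifferentiableOn ℂ h V)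
    {V₁ : Set (Fin b → ℂ)} (h1 : IsOpen V₁) (hne : V₁.Nonempty) (hsubV : V₁ ⊆ V)
    (hz : ∀ w ∈ V₁, h w = 0) : ∀ w ∈ V, h w = 0 := by
  classical
  -- key step: vanishing on a small ball propagates to a bigger ball
  have key : ∀ (p : Fin b → ℂ) (ε δ : ℝ), 0 < δ → Metric.ball p ε ⊆ V →
      (∀ x ∈ Metric.ball p δ, h x = 0) → ∀ x ∈ Metric.ball p ε, h x = 0 := by
    intro p ε δ hδ hball hvan x hx
    by_cases hxp : x = p
    · exact hvan x (by simp [hxp, hδ])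
    have hxpn : (0:ℝ) < ‖x - p‖ := by
      simpa [sub_eq_zero] using norm_sub_pos_iff.mpr hxp
    set R : ℝ := ε / ‖x - p‖ with hR
    have hxe : ‖x - p‖ < ε := by simpa [dist_eq_norm] using hx
    have hR1 : 1 < R := (one_lt_div hxpn).mpr hxe
    set L : ℂ → (Fin b → ℂ) := fun t => p + t • (x - p) with hL
    have hmaps : ∀ t ∈ Metric.ball (0:ℂ) R, L t ∈ V := by
      intro t ht
      apply hball
      have : ‖t‖ < R := by simpa [dist_eq_norm] using ht
      have : ‖t • (x - p)‖ < ε := by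
        rw [norm_smul]
        calc ‖t‖ * ‖x - p‖ < R * ‖x - p‖ := by
              exact mul_lt_mul_of_pos_right this hxpn
          _ = ε := by rw [hR]; field_simp
      simpa [dist_eq_norm, hL, add_sub_cancel_left] using this
    have hLd : Differentiable ℂ L := by
      apply (differentiable_const p).add
      fun_prop
    have hφ : DifferentiableOn ℂ (fun t => h (L t)) (Metric.ball (0:ℂ) R) :=
      hd.comp hLd.differentiableOn hmaps
    have hφa : AnalyticOnNhd ℂ (fun t => h (L t)) (Metric.ball (0:ℂ) R) :=
      hφ.analyticOnNhd Metric.isOpen_ball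
    have h0mem : (0:ℂ) ∈ Metric.ball (0:ℂ) R := by
      simp [Metric.mem_ball]; linarith
    have hev : (fun t => h (L t)) =ᶠ[nhds (0:ℂ)] 0 := by
      have hsm : Metric.ball (0:ℂ) (δ / ‖x - p‖) ∈ nhds (0:ℂ) :=
        Metric.ball_mem_nhds _ (div_pos hδ hxpn)
      filter_upwards [hsm] with t ht
      apply hvan
      have : ‖t‖ < δ / ‖x - p‖ := by simpa [dist_eq_norm] using ht
      have : ‖t • (x - p)‖ < δ := by
        rw [norm_smul]
        calc ‖t‖ * ‖x - p‖ < (δ / ‖x - p‖) * ‖x - p‖ :=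
              mul_lt_mul_of_pos_right this hxpn
          _ = δ := by field_simp
      simpa [dist_eq_norm, hL, add_sub_cancel_left] using this
    have := hφa.eqOn_zero_of_preconnected_of_eventuallyEq_zero
      (Convex.isPreconnected (convex_ball (0:ℂ) R)) h0mem hev
    have h1R : (1:ℂ) ∈ Metric.ball (0:ℂ) R := by
      simp only [Metric.mem_ball, dist_zero_right, norm_one]; exact hR1
    have := this h1R
    simpa [hL] using this
  -- the set of points near which h vanishes
  set u : Set (Fin b → ℂ) :=
    {w | ∃ ε > 0, Metric.ball w ε ⊆ V ∧ ∀ x ∈ Metric.ball w ε, h x = 0} with hu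
  have huopen : IsOpen u := by
    rw [Metric.isOpen_iff]
    rintro w ⟨ε, hε, hbV, hvan⟩
    refine ⟨ε / 2, by linarith, ?_⟩
    intro w' hw'
    have hd' : dist w' w < ε / 2 := hw'
    refine ⟨ε / 2, by linarith, ?_, ?_⟩
    · intro y hy
      apply hbV
      have : dist y w < ε := by
        calc dist y w ≤ dist y w' + dist w' w := dist_triangle _ _ _
          _ < ε / 2 + ε / 2 := by exact add_lt_add hy hd'
          _ = ε := by ring
      exact this
    · intro y hy
      apply hvan
      calc dist y w ≤ dist y w' + dist w' w := dist_triangle _ _ _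
        _ < ε / 2 + ε / 2 := add_lt_add hy hd'
        _ = ε := by ring
  have hVu : V ⊆ u := by
    apply hVc.subset_of_closure_inter_subset huopen
    · obtain ⟨w₁, hw₁⟩ := hne
      obtain ⟨ε, hε, hb⟩ := Metric.isOpen_iff.mp h1 w₁ hw₁
      exact ⟨w₁, hsubV hw₁, ε, hε, hb.trans hsubV, fun x hx => hz x (hb hx)⟩
    · intro w hw
      obtain ⟨hwc, hwV⟩ := hw
      obtain ⟨ε, hε, hb⟩ := Metric.isOpen_iff.mp hV w hwV
      obtain ⟨w', hw'u, hw'd⟩ := Metric.mem_closure_iff.mp hwc (ε/3) (by linarith)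
      obtain ⟨δ, hδ, hδV, hδvan⟩ := hw'u
      have hb' : Metric.ball w' (ε/2) ⊆ V := by
        intro y hy
        apply hb
        calc dist y w ≤ dist y w' + dist w' w := dist_triangle _ _ _
          _ = dist y w' + dist w w' := by rw [dist_comm w' w]
          _ < ε/2 + ε/3 := add_lt_add hy hw'd
          _ < ε := by linarith
      have hvan' : ∀ x ∈ Metric.ball w' (ε/2), h x = 0 := by
        refine key w' (ε/2) (min δ (ε/2)) (lt_min hδ (by linarith)) hb' ?_
        intro x hx
        exact hδvan x (Metric.ball_subset_ball (min_le_left _ _) hx)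
      have hwmem : dist w w' < ε/2 := by linarith
      refine ⟨ε/2 - dist w w', by linarith, ?_, ?_⟩
      · intro y hy
        apply hb'
        have : dist y w' ≤ dist y w + dist w w' := dist_triangle _ _ _
        have hyd : dist y w < ε/2 - dist w w' := hy
        simp only [Metric.mem_ball]
        linarith
      · intro y hy
        apply hvan'
        have : dist y w' ≤ dist y w + dist w w' := dist_triangle _ _ _
        have hyd : dist y w < ε/2 - dist w w' := hy
        simp only [Metric.mem_ball]
        linarith
  intro w hw
  obtain ⟨ε, hε, _, hvan⟩ := hVu hw
  exact hvan w (Metric.mem_ball_self hε)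


/-- Core lemma: extending a holomorphic linear dependence relation. -/
private lemma myCore {a b : ℕ} {idx : Type*} [DecidableEq idx]
    (U : Set (Fin a → ℂ)) (V : Set (Fin b → ℂ))
    (hV : IsOpen V) (hVc : IsConnected V)
    (V₁ : Set (Fin b → ℂ)) (hV₁ : IsOpen V₁) (hV₁ne : V₁.Nonempty) (hV₁V : V₁ ⊆ V)
    (s : Finset idx) (G : idx → (Fin a → ℂ) → (Fin b → ℂ) → ℂ)
    (hGd : ∀ mo ∈ s, ∀ z ∈ U, DifferentiableOn ℂ (G mo z) V)
    (hdep : ∀ w ∈ V₁, ∃ cf : idx → ℂ, (∃ mo ∈ s, cf mo ≠ 0) ∧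
      ∀ z ∈ U, ∑ mo ∈ s, cf mo * G mo z w = 0) :
    ∃ (s' : Finset idx) (c' : idx → (Fin b → ℂ) → ℂ), s' ⊆ s ∧
      (∀ mo ∈ s', DifferentiableOn ℂ (c' mo) V) ∧
      (∃ mo ∈ s', ¬ ∀ w ∈ V, c' mo w = 0) ∧
      ∀ z ∈ U, ∀ w ∈ V, ∑ mo ∈ s', c' mo w * G mo z w = 0 := by
  classical
  set n := s.card with hn
  set Good : ℕ → Prop := fun k =>
    ∃ zs : Fin k → (Fin a → ℂ), (∀ l, zs l ∈ U) ∧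
    ∃ ι : Fin k → idx, (∀ j, ι j ∈ s) ∧
      ¬ ∀ w ∈ V, Matrix.det (Matrix.of fun l j => G (ι j) (zs l) w) = 0 with hGood
  obtain ⟨w₁, hw₁⟩ := hV₁ne
  have good0 : Good 0 := by
    refine ⟨Fin.elim0, fun l => l.elim0, Fin.elim0, fun j => j.elim0, fun hall => ?_⟩
    have := hall w₁ (hV₁V hw₁)
    simpa [Matrix.det_fin_zero] using this
  have notGoodn : ¬ Good n := by
    rintro ⟨zs, hzs, ι, hι, hdet⟩
    push_neg at hdet
    obtain ⟨wd, hwdV, hwd⟩ := hdet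
    have hinj : Function.Injective ι := by
      intro j j' hjj'
      by_contra hne
      apply hwd
      exact Matrix.det_zero_of_column_eq hne (fun k => by simp [hjj'])
    have himgsub : Finset.image ι Finset.univ ⊆ s :=
      Finset.image_subset_iff.mpr fun j _ => hι j
    have himg : Finset.image ι Finset.univ = s := by
      apply Finset.eq_of_subset_of_card_le himgsub
      rw [Finset.card_image_of_injective _ hinj]
      simp [hn]
    have hdiffdet : DifferentiableOn ℂ
        (fun w => Matrix.det (Matrix.of fun l j => G (ι j) (zs l) w)) V :=
      myDetDiffOn _ fun l j => hGd (ι j) (hι j) (zs l) (hzs l)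
    have hvanish : ∀ w ∈ V₁,
        Matrix.det (Matrix.of fun l j => G (ι j) (zs l) w) = 0 := by
      intro w hw
      obtain ⟨cf, ⟨mo₁, hmo₁s, hmo₁⟩, hrel⟩ := hdep w hw
      rw [← Matrix.exists_mulVec_eq_zero_iff]
      refine ⟨fun j => cf (ι j), ?_, ?_⟩
      · obtain ⟨j, _, hj⟩ := Finset.mem_image.mp (himg ▸ hmo₁s)
        intro hv0
        exact hmo₁ (by rw [← hj]; exact congrFun hv0 j)
      · funext l
        simp only [Matrix.mulVec, dotProduct, Matrix.of_apply, Pi.zero_apply]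
        have h1 : ∑ mo ∈ s, cf mo * G mo (zs l) w = 0 := hrel (zs l) (hzs l)
        rw [← himg, Finset.sum_image (fun x _ y _ hxy => hinj hxy)] at h1
        rw [← h1]
        exact Finset.sum_congr rfl fun j _ => mul_comm _ _
    have := myIdentity hV hVc.isPreconnected hdiffdet hV₁ ⟨w₁, hw₁⟩ hV₁V hvanish
    exact hwd (this wd hwdV)
  set r := Nat.findGreatest Good n with hr
  have hGoodr : Good r := Nat.findGreatest_spec (Nat.zero_le n) good0
  have hrlt : r < n :=
    lt_of_le_of_ne (Nat.findGreatest_le n) (fun h => notGoodn (h ▸ hGoodr))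
  have hnotr1 : ¬ Good (r + 1) := Nat.findGreatest_is_greatest (Nat.lt_succ_self r) hrlt
  obtain ⟨zs, hzs, ι, hι, hdet⟩ := hGoodr
  have hnotall : ¬ s ⊆ Finset.image ι Finset.univ := by
    intro hss
    have h1 := Finset.card_le_card hss
    have h2 : (Finset.image ι Finset.univ).card ≤ r := by
      simpa using Finset.card_image_le (s := (Finset.univ : Finset (Fin r))) (f := ι)
    omega
  obtain ⟨i₀, hi₀s, hi₀⟩ := Finset.not_subset.mp hnotall
  set ι' : Fin (r + 1) → idx := Fin.snoc ι i₀ with hι'def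
  have hι' : ∀ j, ι' j ∈ s := by
    intro j
    induction j using Fin.lastCases with
    | last => simpa [hι'def] using hi₀s
    | cast l => simpa [hι'def] using hι l
  have hbig : ∀ z ∈ U, ∀ w ∈ V,
      Matrix.det (Matrix.of fun l j => G (ι' j) ((Fin.snoc zs z : Fin (r+1) → Fin a → ℂ) l) w) = 0 := by
    intro z hz w hw
    by_contra hne
    apply hnotr1
    refine ⟨(Fin.snoc zs z : Fin (r+1) → (Fin a → ℂ)), ?_, ι', hι', fun hall => hne (hall w hw)⟩
    intro l
    induction l using Fin.lastCases with
    | last => simpa using hz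
    | cast l => simpa using hzs l
  set e : Fin (r + 1) → (Fin b → ℂ) → ℂ := fun j w =>
    (-1 : ℂ) ^ (r + (j : ℕ)) *
      Matrix.det (Matrix.of fun (l k : Fin r) => G (ι' (j.succAbove k)) (zs l) w) with he
  have hexp : ∀ z ∈ U, ∀ w ∈ V, ∑ j : Fin (r + 1), e j w * G (ι' j) z w = 0 := by
    intro z hz w hw
    have h0 := hbig z hz w hw
    rw [Matrix.det_succ_row _ (Fin.last r)] at h0
    refine Eq.trans (Finset.sum_congr rfl fun j _ => ?_) h0
    have hA : (Matrix.of fun l j' => G (ι' j') ((Fin.snoc zs z : Fin (r+1) → Fin a → ℂ) l) w) (Fin.last r) j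
        = G (ι' j) z w := by simp
    have hsub : ((Matrix.of fun l j' => G (ι' j') ((Fin.snoc zs z : Fin (r+1) → Fin a → ℂ) l) w).submatrix
        (Fin.last r).succAbove j.succAbove)
        = Matrix.of fun (l k : Fin r) => G (ι' (j.succAbove k)) (zs l) w := by
      ext l k
      simp [Matrix.submatrix_apply, Fin.succAbove_last]
    rw [hA, hsub, Fin.val_last, he]
    ring
  set c' : idx → (Fin b → ℂ) → ℂ := fun mo w =>
    ∑ j : Fin (r + 1), if ι' j = mo then e j w else 0 with hc'
  refine ⟨Finset.image ι' Finset.univ, c',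
    Finset.image_subset_iff.mpr fun j _ => hι' j, ?_, ?_, ?_⟩
  · intro mo _
    apply DifferentiableOn.fun_sum
    intro j _
    by_cases hj : ι' j = mo
    · simp only [hj, if_pos rfl, he]
      exact (differentiableOn_const _).mul
        (myDetDiffOn _ fun l k => hGd _ (hι' _) (zs l) (hzs l))
    · simp only [if_neg hj]
      exact differentiableOn_const 0
  · refine ⟨i₀, Finset.mem_image.mpr ⟨Fin.last r, Finset.mem_univ _, by simp [hι'def]⟩,
      fun hall => hdet fun w hw => ?_⟩
    have hc'val : c' i₀ w = e (Fin.last r) w := by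
      simp only [hc']
      rw [Fin.sum_univ_castSucc]
      have : ∀ l : Fin r, (if ι' (Fin.castSucc l) = i₀ then e (Fin.castSucc l) w else 0) = 0 := by
        intro l
        rw [if_neg]
        intro hlast
        apply hi₀
        refine Finset.mem_image.mpr ⟨l, Finset.mem_univ _, ?_⟩
        simpa [hι'def] using hlast
      rw [Finset.sum_congr rfl fun l _ => this l]
      simp [hι'def]
    have h0 := hall w hw
    rw [hc'val] at h0
    simp only [he] at h0
    have hmat : (Matrix.of fun (l k : Fin r) => G (ι' ((Fin.last r).succAbove k)) (zs l) w)
        = Matrix.of fun l j => G (ι j) (zs l) w := by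
      ext l k
      simp [Fin.succAbove_last, hι'def]
    rw [hmat] at h0
    have hpow : ((-1 : ℂ)) ^ (r + ((Fin.last r : Fin (r+1)) : ℕ)) = 1 := by
      rw [Fin.val_last, ← two_mul, pow_mul]
      norm_num
    rw [hpow, one_mul] at h0
    exact h0
  · intro z hz w hw
    have step1 : ∑ mo ∈ Finset.image ι' Finset.univ, c' mo w * G mo z w
        = ∑ j : Fin (r + 1), e j w * G (ι' j) z w := by
      simp only [hc', Finset.sum_mul]
      rw [Finset.sum_comm]
      refine Finset.sum_congr rfl fun j _ => ?_
      have : ∀ mo ∈ Finset.image ι' Finset.univ,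
          (if ι' j = mo then e j w else 0) * G mo z w
          = if ι' j = mo then e j w * G (ι' j) z w else 0 := by
        intro mo _
        by_cases hjm : ι' j = mo
        · simp [hjm]
        · simp [hjm]
      rw [Finset.sum_congr rfl this, Finset.sum_ite_eq,
        if_pos (Finset.mem_image.mpr ⟨j, Finset.mem_univ _, rfl⟩)]
    rw [step1]
    exact hexp z hz w hw


/-- **Lemma 3.2.1** (propagation of algebraicity).  Let `f` be holomorphic on `U × V`.
If there is a subdomain `V₀ ⊆ V` and a nontrivial polynomial `P(z, X; w)` in `(z, X)`
with coefficients holomorphic on `V₀` such that `P(z, f(z,w); w) ≡ 0` on `U × V₀`, then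
there is a nontrivial polynomial `P̃(z, X; w)` with coefficients holomorphic on `V` such
that `P̃(z, f(z,w); w) ≡ 0` on `U × V`. -/
theorem statement_15 {a b : ℕ} (U : Set (Fin a → ℂ)) (V V₀ : Set (Fin b → ℂ))
    (hU : IsOpen U) (hUc : IsConnected U)
    (hV : IsOpen V) (hVc : IsConnected V)
    (hV₀ : IsOpen V₀) (hV₀c : IsConnected V₀) (hV₀ne : V₀.Nonempty) (hsub : V₀ ⊆ V)
    (f : (Fin a → ℂ) × (Fin b → ℂ) → ℂ)
    (hf : DifferentiableOn ℂ f (U ×ˢ V))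
    (s : Finset ((Fin a → ℕ) × ℕ))
    (c : ((Fin a → ℕ) × ℕ) → (Fin b → ℂ) → ℂ)
    (hc : ∀ mo ∈ s, DifferentiableOn ℂ (c mo) V₀)
    (hnt : ∃ mo ∈ s, ¬ ∀ w ∈ V₀, c mo w = 0)
    (hid : ∀ z ∈ U, ∀ w ∈ V₀,
      ∑ mo ∈ s, c mo w * (∏ i, z i ^ mo.1 i) * f (z, w) ^ mo.2 = 0) :
    ∃ (s' : Finset ((Fin a → ℕ) × ℕ)) (c' : ((Fin a → ℕ) × ℕ) → (Fin b → ℂ) → ℂ),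
      (∀ mo ∈ s', DifferentiableOn ℂ (c' mo) V) ∧
      (∃ mo ∈ s', ¬ ∀ w ∈ V, c' mo w = 0) ∧
      ∀ z ∈ U, ∀ w ∈ V,
        ∑ mo ∈ s', c' mo w * (∏ i, z i ^ mo.1 i) * f (z, w) ^ mo.2 = 0 := by
  classical
  obtain ⟨mo₀, hmo₀s, hmo₀⟩ := hnt
  set G : ((Fin a → ℕ) × ℕ) → (Fin a → ℂ) → (Fin b → ℂ) → ℂ :=
    fun mo z w => (∏ i, z i ^ mo.1 i) * f (z, w) ^ mo.2 with hGdef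
  have hGd : ∀ mo ∈ s, ∀ z ∈ U, DifferentiableOn ℂ (G mo z) V := by
    intro mo _ z hz
    have hpair : DifferentiableOn ℂ (fun w : Fin b → ℂ => ((z, w) : (Fin a → ℂ) × (Fin b → ℂ))) V :=
      (differentiableOn_const z).prodMk differentiableOn_id
    have hzw : DifferentiableOn ℂ (fun w : Fin b → ℂ => f (z, w)) V :=
      hf.comp hpair (fun w hw => Set.mem_prod.mpr ⟨hz, hw⟩)
    exact (differentiableOn_const _).mul (hzw.pow _)
  set V₁ : Set (Fin b → ℂ) := V₀ ∩ c mo₀ ⁻¹' {0}ᶜ with hV₁def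
  have hV₁ : IsOpen V₁ :=
    (hc mo₀ hmo₀s).continuousOn.isOpen_inter_preimage hV₀ isOpen_compl_singleton
  have hV₁ne : V₁.Nonempty := by
    push_neg at hmo₀
    obtain ⟨w₀, hw₀, h0⟩ := hmo₀
    exact ⟨w₀, hw₀, by simpa using h0⟩
  have hV₁V : V₁ ⊆ V := fun w hw => hsub hw.1
  have hdep : ∀ w ∈ V₁, ∃ cf : ((Fin a → ℕ) × ℕ) → ℂ, (∃ mo ∈ s, cf mo ≠ 0) ∧
      ∀ z ∈ U, ∑ mo ∈ s, cf mo * G mo z w = 0 := by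
    intro w hw
    refine ⟨fun mo => c mo w, ⟨mo₀, hmo₀s, by simpa using hw.2⟩, fun z hz => ?_⟩
    have h1 := hid z hz w hw.1
    rw [← h1]
    exact Finset.sum_congr rfl fun mo _ => (mul_assoc _ _ _).symm
  obtain ⟨s', c', _, hdiff, hnt', hrel⟩ := myCore U V hV hVc V₁ hV₁ hV₁ne hV₁V s G hGd hdep
  refine ⟨s', c', hdiff, hnt', fun z hz w hw => ?_⟩
  rw [← hrel z hz w hw]
  exact Finset.sum_congr rfl fun mo _ => mul_assoc _ _ _


end
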